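/- Let X and Y be independent real random variables with lb_X ≤ X ≤ ub_X, lb_Y ≤ Y ≤ ub_Y almost surely, lb_Y ≥ ub_X, E[Y] > E[X], and let c ≥ 0 satisfy c/(E[Y] − E[X]) ≤ 1. Then P(|X − Y| < c) ≤ 1 − (1 − c/(E[Y]−E[X]))² · (E[Y]−E[X])/(ub_Y − lb_X). -/

import Mathlib

open MeasureTheory ProbabilityTheory

/-!
Put `m = E[Y] - E[X]` and `M = ubY - lbX`. Since `Y - X ≤ M` almost surely, Markov's inequality
for the nonnegative variable `M - (Y - X)` gives `(M - c) · P(Y - X ≤ c) ≤ M - m`, and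
`|X - Y| < c` forces `Y - X ≤ c`. The stated bound follows from this one because
`(1 - c/m)² ≤ 1 - c/m`.
-/

theorem mul_meas_le_le_sub_integral_of_ae_le {Ω : Type*} [MeasurableSpace Ω] {μ : Measure Ω}
    [IsProbabilityMeasure μ] {Z : Ω → ℝ} {M : ℝ} (hZ : Integrable Z μ)
    (hZM : ∀ᵐ ω ∂μ, Z ω ≤ M) (c : ℝ) :
    (M - c) * μ.real {ω | Z ω ≤ c} ≤ M - ∫ ω, Z ω ∂μ := by
  have hmarkov := mul_meas_ge_le_integral_of_nonneg (f := fun ω ↦ M - Z ω)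
    (by filter_upwards [hZM] with ω h using sub_nonneg.2 h) ((integrable_const M).sub hZ) (M - c)
  simp only [sub_le_sub_iff_left] at hmarkov
  simpa [integral_sub (integrable_const M) hZ] using hmarkov

theorem le_one_sub_one_sub_div_sq_mul_div {P c m M : ℝ} (hc : 0 ≤ c) (hcm : c / m ≤ 1)
    (hm : 0 < m) (hmM : m ≤ M) (hP : P ≤ 1) (hPM : (M - c) * P ≤ M - m) :
    P ≤ 1 - (1 - c / m) ^ 2 * (m / M) := by
  have hM : 0 < M := hm.trans_le hmM
  have hsq : (1 - c / m) ^ 2 * (m / M) ≤ (m - c) / M := by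
    calc (1 - c / m) ^ 2 * (m / M) ≤ (1 - c / m) * (m / M) := by
          gcongr; nlinarith [div_nonneg hc hm.le]
      _ = (m - c) / M := by field_simp
  have hlin : (m - c) / M ≤ 1 - P := by
    rw [div_le_iff₀ hM]
    nlinarith
  linarith

theorem paley_zygmund_prob_upper_bound_general {Ω : Type*} [MeasurableSpace Ω]
    (μ : Measure Ω) [IsProbabilityMeasure μ] (X Y : Ω → ℝ)
    (lbX ubX lbY ubY c : ℝ)
    (hXint : Integrable X μ) (hYint : Integrable Y μ)
    (hXbd : ∀ᵐ ω ∂μ, lbX ≤ X ω ∧ X ω ≤ ubX)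
    (hYbd : ∀ᵐ ω ∂μ, lbY ≤ Y ω ∧ Y ω ≤ ubY)
    (hmean : ∫ ω, X ω ∂μ < ∫ ω, Y ω ∂μ)
    (hc0 : 0 ≤ c)
    (hc1 : c / ((∫ ω, Y ω ∂μ) - ∫ ω, X ω ∂μ) ≤ 1) :
    (μ {ω | |X ω - Y ω| < c}).toReal ≤
      1 - (1 - c / ((∫ ω, Y ω ∂μ) - ∫ ω, X ω ∂μ)) ^ 2 *
        (((∫ ω, Y ω ∂μ) - ∫ ω, X ω ∂μ) / (ubY - lbX)) := by
  have hm : 0 < (∫ ω, Y ω ∂μ) - ∫ ω, X ω ∂μ := sub_pos.2 hmean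
  have hZint : Integrable (fun ω ↦ Y ω - X ω) μ := hYint.sub hXint
  have hZmean : ∫ ω, Y ω - X ω ∂μ = (∫ ω, Y ω ∂μ) - ∫ ω, X ω ∂μ := integral_sub hYint hXint
  have hZM : ∀ᵐ ω ∂μ, Y ω - X ω ≤ ubY - lbX := by
    filter_upwards [hXbd, hYbd] with ω hX hY
    linarith [hX.1, hY.2]
  have hmM : (∫ ω, Y ω ∂μ) - ∫ ω, X ω ∂μ ≤ ubY - lbX := by
    simpa [hZmean] using integral_mono_ae hZint (integrable_const _) hZM
  have hcM : c ≤ ubY - lbX := ((div_le_one hm).1 hc1).trans hmM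
  have hsub : {ω | |X ω - Y ω| < c} ⊆ {ω | Y ω - X ω ≤ c} := fun ω hω ↦
    ((abs_sub_comm (X ω) (Y ω) ▸ le_abs_self (Y ω - X ω)).trans_lt hω).le
  refine le_one_sub_one_sub_div_sq_mul_div hc0 hc1 hm hmM measureReal_le_one ?_
  calc (ubY - lbX - c) * μ.real {ω | |X ω - Y ω| < c}
      ≤ (ubY - lbX - c) * μ.real {ω | Y ω - X ω ≤ c} :=
        mul_le_mul_of_nonneg_left (measureReal_mono hsub) (sub_nonneg.2 hcM)
    _ ≤ _ := hZmean ▸ mul_meas_le_le_sub_integral_of_ae_le hZint hZM c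

theorem paley_zygmund_prob_upper_bound {Ω : Type*} [MeasurableSpace Ω]
    (μ : Measure Ω) [IsProbabilityMeasure μ] (X Y : Ω → ℝ)
    (lbX ubX lbY ubY c : ℝ)
    (hindep : IndepFun X Y μ)
    (hXint : Integrable X μ) (hYint : Integrable Y μ)
    (hXbd : ∀ᵐ ω ∂μ, lbX ≤ X ω ∧ X ω ≤ ubX)
    (hYbd : ∀ᵐ ω ∂μ, lbY ≤ Y ω ∧ Y ω ≤ ubY)
    (hord : ubX ≤ lbY)
    (hmean : ∫ ω, X ω ∂μ < ∫ ω, Y ω ∂μ)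
    (hc0 : 0 ≤ c)
    (hc1 : c / ((∫ ω, Y ω ∂μ) - ∫ ω, X ω ∂μ) ≤ 1) :
    (μ {ω | |X ω - Y ω| < c}).toReal ≤
      1 - (1 - c / ((∫ ω, Y ω ∂μ) - ∫ ω, X ω ∂μ)) ^ 2 *
        (((∫ ω, Y ω ∂μ) - ∫ ω, X ω ∂μ) / (ubY - lbX)) :=
  paley_zygmund_prob_upper_bound_general μ X Y lbX ubX lbY ubY c hXint hYint hXbd hYbd hmean hc0 hc1
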